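/- Theorem 1 (ISS of single-layer GRUs): fix λ̌ ≥ 1 and suppose ‖U_r‖_∞ · σ(‖[W_f U_f b_f]‖_∞) < 1. Then the single-layer GRU is Input-to-State Stable: there exist a class-KL function β and class-K∞ functions γ_u, γ_b such that for every bias vector b_r ∈ ℝ^{n_x}, every initial state x̄ with ‖x̄‖_∞ ≤ λ̌, every input sequence u with ‖u(t)‖_∞ ≤ 1 for all t, and every k ≥ 0, the state trajectory satisfies ‖x(k)‖_∞ ≤ β(‖x̄‖_∞, k) + γ_u(sup_t ‖u(t)‖_∞) + γ_b(‖b_r‖_∞). -/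

import Mathlib

open Real Filter

/-- The sigmoid activation function. -/
noncomputable def sigmoid (s : ℝ) : ℝ := 1 / (1 + Real.exp (-s))

/-- Induced infinity norm of a matrix (maximum absolute row sum). -/
noncomputable def matNorm {n m : ℕ} (A : Matrix (Fin n) (Fin m) ℝ) : ℝ :=
  ⨆ i, ∑ j, |A i j|

/-- Infinity norm of the horizontal concatenation `[A B c]`
(maximum absolute row sum of the concatenated matrix). -/
noncomputable def catNorm {n m p : ℕ} (A : Matrix (Fin n) (Fin m) ℝ)
    (B : Matrix (Fin n) (Fin p) ℝ) (c : Fin n → ℝ) : ℝ :=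
  ⨆ i, (∑ j, |A i j| + ∑ j, |B i j| + |c i|)

/-- One step of the single-layer GRU:
`x⁺ = z ∘ x + (1 - z) ∘ tanh(W_r u + U_r (f ∘ x) + b_r)`,
`z = σ(W_z u + U_z x + b_z)`, `f = σ(W_f u + U_f x + b_f)`. -/
noncomputable def gruStep {nu nx : ℕ}
    (Wz Wf Wr : Matrix (Fin nx) (Fin nu) ℝ)
    (Uz Uf Ur : Matrix (Fin nx) (Fin nx) ℝ)
    (bz bf br : Fin nx → ℝ)
    (u : Fin nu → ℝ) (x : Fin nx → ℝ) : Fin nx → ℝ :=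
  let z : Fin nx → ℝ := fun i => _root_.sigmoid ((Wz.mulVec u + Uz.mulVec x + bz) i)
  let f : Fin nx → ℝ := fun i => _root_.sigmoid ((Wf.mulVec u + Uf.mulVec x + bf) i)
  let r : Fin nx → ℝ := fun i => Real.tanh ((Wr.mulVec u + Ur.mulVec (f * x) + br) i)
  fun j => z j * x j + (1 - z j) * r j

/-- A function `γ : [0,∞) → [0,∞)` is of class K∞ if it is continuous,
strictly increasing, unbounded and `γ 0 = 0`. -/
def IsKInf (γ : ℝ → ℝ) : Prop :=
  ContinuousOn γ (Set.Ici 0) ∧ StrictMonoOn γ (Set.Ici 0) ∧ γ 0 = 0 ∧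
    ∀ M : ℝ, ∃ s, 0 ≤ s ∧ M < γ s

/-- A function `β : [0,∞) × ℕ → [0,∞)` is of class KL if `β (·, k)` is of class K∞
for each `k`, `β (s, ·)` is nonincreasing, and `β (s, k) → 0` as `k → ∞`. -/
def IsKL (β : ℝ → ℕ → ℝ) : Prop :=
  (∀ k : ℕ, IsKInf fun s => β s k) ∧
    (∀ s : ℝ, 0 ≤ s → ∀ k l : ℕ, k ≤ l → β s l ≤ β s k) ∧
    (∀ s : ℝ, 0 ≤ s → Filter.Tendsto (fun k : ℕ => β s k) Filter.atTop (nhds 0))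

/-! On the ball `‖x‖ ≤ λ̌` (invariant, since every component of the next state is a convex
combination of `x_j` and a value of `tanh`) the update gate `z` stays below some `z̄ < 1`.
The hypothesis on the forget gate makes the candidate `tanh(W_r u + U_r (f ∘ x) + b_r)` bounded
by `c ‖x‖ + ‖W_r‖ ‖u‖ + ‖b_r‖` with `c < 1`: for small `x` through `|tanh s| ≤ |s|` and the bound
on `f`, for large `x` through `|tanh s| ≤ 1`. Hence
`‖x(k+1)‖ ≤ ρ ‖x(k)‖ + ‖W_r‖ sup_t ‖u(t)‖ + ‖b_r‖` with `ρ = z̄ + (1 - z̄) c < 1`, and iterating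
gives the estimate with `β(s, k) = ρ^k s` and linear gains. -/

lemma sigmoid_eq_real_sigmoid : _root_.sigmoid = Real.sigmoid := by
  ext s
  simp [_root_.sigmoid, Real.sigmoid_def]

namespace Real

lemma sinh_le_mul_cosh {x : ℝ} (hx : 0 ≤ x) : sinh x ≤ x * cosh x := by
  rcases hx.eq_or_lt with rfl | hx
  · simp
  obtain ⟨c, hc, hslope⟩ := exists_hasDerivAt_eq_slope sinh cosh hx
    continuous_sinh.continuousOn fun c _ => hasDerivAt_sinh c
  rw [sinh_zero, sub_zero, sub_zero, eq_div_iff hx.ne'] at hslope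
  have hcosh : cosh c ≤ cosh x :=
    cosh_le_cosh.2 <| by rw [abs_of_pos hc.1, abs_of_pos hx]; exact hc.2.le
  rw [← hslope, mul_comm x]
  exact mul_le_mul_of_nonneg_right hcosh hx.le

lemma abs_sinh_le_mul_cosh (x : ℝ) : |sinh x| ≤ |x| * cosh x := by
  rcases le_total 0 x with hx | hx
  · rw [abs_of_nonneg (sinh_nonneg_iff.2 hx), abs_of_nonneg hx]
    exact sinh_le_mul_cosh hx
  · simpa [abs_of_nonpos hx, abs_of_nonpos (sinh_nonpos_iff.2 hx)] using
      sinh_le_mul_cosh (neg_nonneg.2 hx)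

lemma abs_tanh_le_abs (x : ℝ) : |tanh x| ≤ |x| := by
  rw [tanh_eq_sinh_div_cosh, abs_div, abs_of_pos (cosh_pos x), div_le_iff₀ (cosh_pos x)]
  exact abs_sinh_le_mul_cosh x

end Real

open Matrix Topology

section MatrixNorm

variable {n m : ℕ}

lemma sum_abs_row_le_matNorm (A : Matrix (Fin n) (Fin m) ℝ) (i : Fin n) :
    ∑ j, |A i j| ≤ matNorm A :=
  le_ciSup (f := fun i => ∑ j, |A i j|) (Set.finite_range _).bddAbove i

lemma matNorm_nonneg (A : Matrix (Fin n) (Fin m) ℝ) : 0 ≤ matNorm A :=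
  Real.iSup_nonneg fun _ => Finset.sum_nonneg fun _ _ => abs_nonneg _

lemma sum_abs_row_add_le_catNorm {p : ℕ} (A : Matrix (Fin n) (Fin m) ℝ)
    (B : Matrix (Fin n) (Fin p) ℝ) (c : Fin n → ℝ) (i : Fin n) :
    ∑ j, |A i j| + ∑ j, |B i j| + |c i| ≤ catNorm A B c :=
  le_ciSup (f := fun i => ∑ j, |A i j| + ∑ j, |B i j| + |c i|) (Set.finite_range _).bddAbove i

lemma abs_mulVec_apply_le_sum_mul_norm (A : Matrix (Fin n) (Fin m) ℝ) (w : Fin m → ℝ)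
    (i : Fin n) : |(A *ᵥ w) i| ≤ (∑ j, |A i j|) * ‖w‖ :=
  calc |(A *ᵥ w) i| = |∑ j, A i j * w j| := rfl
    _ ≤ ∑ j, |A i j| * |w j| := by
      simpa only [abs_mul] using Finset.abs_sum_le_sum_abs (fun j => A i j * w j) Finset.univ
    _ ≤ ∑ j, |A i j| * ‖w‖ := by
      gcongr with j
      exact norm_le_pi_norm w j
    _ = (∑ j, |A i j|) * ‖w‖ := (Finset.sum_mul _ _ _).symm

lemma abs_mulVec_apply_le (A : Matrix (Fin n) (Fin m) ℝ) (w : Fin m → ℝ) (i : Fin n) :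
    |(A *ᵥ w) i| ≤ matNorm A * ‖w‖ :=
  (abs_mulVec_apply_le_sum_mul_norm A w i).trans <|
    mul_le_mul_of_nonneg_right (sum_abs_row_le_matNorm A i) (norm_nonneg w)

end MatrixNorm

lemma abs_mul_add_one_sub_mul_le {z a b A B : ℝ} (hz₀ : 0 ≤ z) (hz₁ : z ≤ 1)
    (ha : |a| ≤ A) (hb : |b| ≤ B) : |z * a + (1 - z) * b| ≤ z * A + (1 - z) * B :=
  calc |z * a + (1 - z) * b| ≤ |z * a| + |(1 - z) * b| := abs_add_le _ _
    _ = z * |a| + (1 - z) * |b| := by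
      rw [abs_mul, abs_mul, abs_of_nonneg hz₀, abs_of_nonneg (sub_nonneg.2 hz₁)]
    _ ≤ z * A + (1 - z) * B := by gcongr

lemma norm_mul_le_of_forall_le {ι : Type*} [Fintype ι] {f x : ι → ℝ} {c : ℝ} (hc : 0 ≤ c)
    (hf₀ : ∀ i, 0 ≤ f i) (hf : ∀ i, f i ≤ c) : ‖f * x‖ ≤ c * ‖x‖ := by
  refine (pi_norm_le_iff_of_nonneg (by positivity)).2 fun i => ?_
  rw [Pi.mul_apply, norm_mul, Real.norm_of_nonneg (hf₀ i)]
  exact mul_le_mul (hf i) (norm_le_pi_norm x i) (norm_nonneg _) hc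

lemma mul_add_one_sub_mul_le {z zb c s g : ℝ} (hz₀ : 0 ≤ z) (hz : z ≤ zb) (hc : c ≤ 1)
    (hs : 0 ≤ s) (hg : 0 ≤ g) : z * s + (1 - z) * (c * s + g) ≤ (zb + (1 - zb) * c) * s + g := by
  nlinarith [mul_nonneg (mul_nonneg (sub_nonneg.2 hz) (sub_nonneg.2 hc)) hs, mul_nonneg hz₀ hg]

lemma le_pow_mul_add_div_of_le_mul_add {a : ℕ → ℝ} {ρ g : ℝ} (hρ₀ : 0 ≤ ρ) (hρ₁ : ρ < 1)
    (hg : 0 ≤ g) (h : ∀ k, a (k + 1) ≤ ρ * a k + g) (k : ℕ) :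
    a k ≤ ρ ^ k * a 0 + g / (1 - ρ) := by
  have h1ρ : 0 < 1 - ρ := sub_pos.2 hρ₁
  induction k with
  | zero => simpa using div_nonneg hg h1ρ.le
  | succ k ih =>
    calc a (k + 1) ≤ ρ * a k + g := h k
      _ ≤ ρ * (ρ ^ k * a 0 + g / (1 - ρ)) + g := by gcongr
      _ = ρ ^ (k + 1) * a 0 + g / (1 - ρ) := by field_simp; ring

lemma isKInf_const_mul {a : ℝ} (ha : 0 < a) : IsKInf fun s => a * s := by
  refine ⟨(continuous_const_mul a).continuousOn, fun s _ t _ hst => mul_lt_mul_of_pos_left hst ha,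
    mul_zero a, fun M => ⟨|M| / a + 1, by positivity, ?_⟩⟩
  show M < a * (|M| / a + 1)
  rw [mul_add, mul_div_cancel₀ _ ha.ne', mul_one]
  linarith [le_abs_self M]

lemma isKL_pow_mul {ρ : ℝ} (hρ₀ : 0 < ρ) (hρ₁ : ρ < 1) : IsKL fun s k => ρ ^ k * s :=
  ⟨fun k => isKInf_const_mul (pow_pos hρ₀ k),
    fun _ hs _ _ hkl => mul_le_mul_of_nonneg_right (pow_le_pow_of_le_one hρ₀.le hρ₁.le hkl) hs,
    fun s _ => by simpa using (tendsto_pow_atTop_nhds_zero_of_lt_one hρ₀.le hρ₁).mul_const s⟩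

section GRU

variable {nu nx : ℕ}

noncomputable def gate (W : Matrix (Fin nx) (Fin nu) ℝ) (U : Matrix (Fin nx) (Fin nx) ℝ)
    (b : Fin nx → ℝ) (u : Fin nu → ℝ) (x : Fin nx → ℝ) : Fin nx → ℝ :=
  fun i => Real.sigmoid ((W *ᵥ u + U *ᵥ x + b) i)

variable (Wz Wf Wr : Matrix (Fin nx) (Fin nu) ℝ) (Uz Uf Ur : Matrix (Fin nx) (Fin nx) ℝ)
  (bz bf br : Fin nx → ℝ)

lemma gruStep_apply (u : Fin nu → ℝ) (x : Fin nx → ℝ) (j : Fin nx) :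
    gruStep Wz Wf Wr Uz Uf Ur bz bf br u x j =
      gate Wz Uz bz u x j * x j + (1 - gate Wz Uz bz u x j) *
        tanh ((Wr *ᵥ u + Ur *ᵥ (gate Wf Uf bf u x * x) + br) j) := by
  simp only [gruStep, sigmoid_eq_real_sigmoid]
  rfl

lemma gate_le {W : Matrix (Fin nx) (Fin nu) ℝ} {U : Matrix (Fin nx) (Fin nx) ℝ}
    {b : Fin nx → ℝ} {u : Fin nu → ℝ} {x : Fin nx → ℝ} {s : ℝ}
    (hu : ‖u‖ ≤ 1) (hx : ‖x‖ ≤ 1 + s) (hs : 0 ≤ s) (i : Fin nx) :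
    gate W U b u x i ≤ Real.sigmoid (catNorm W U b + matNorm U * s) := by
  refine Real.sigmoid_le ?_
  have hW : 0 ≤ ∑ j, |W i j| := Finset.sum_nonneg fun _ _ => abs_nonneg _
  have hU : 0 ≤ ∑ j, |U i j| := Finset.sum_nonneg fun _ _ => abs_nonneg _
  calc (W *ᵥ u + U *ᵥ x + b) i ≤ |(W *ᵥ u) i| + |(U *ᵥ x) i| + |b i| := by
        simp only [Pi.add_apply]
        linarith [le_abs_self ((W *ᵥ u) i), le_abs_self ((U *ᵥ x) i), le_abs_self (b i)]
    _ ≤ (∑ j, |W i j|) * 1 + (∑ j, |U i j|) * (1 + s) + |b i| := by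
        gcongr
        · exact (abs_mulVec_apply_le_sum_mul_norm W u i).trans (by gcongr)
        · exact (abs_mulVec_apply_le_sum_mul_norm U x i).trans (by gcongr)
    _ = (∑ j, |W i j| + ∑ j, |U i j| + |b i|) + (∑ j, |U i j|) * s := by ring
    _ ≤ catNorm W U b + matNorm U * s := by
        gcongr
        · exact sum_abs_row_add_le_catNorm W U b i
        · exact sum_abs_row_le_matNorm U i

/-- The rate `c` in `|tanh(W_r u + U_r (f ∘ x) + b_r)| ≤ c ‖x‖ + ‖W_r‖ ‖u‖ + ‖b_r‖`: the first
term serves `‖x‖ ≤ 1 + ε`, where `f ≤ σ(‖[W_f U_f b_f]‖ + ‖U_f‖ ε)`, the second `‖x‖ > 1 + ε`,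
where `|tanh| ≤ 1 < ‖x‖ / (1 + ε)`. -/
noncomputable def candidateGain (ε : ℝ) : ℝ :=
  max (matNorm Ur * Real.sigmoid (catNorm Wf Uf bf + matNorm Uf * ε)) (1 + ε)⁻¹

/-- The bound `z̄` on the update gate over the ball `‖x‖ ≤ λ̌`. -/
noncomputable def updateGateBound (lam : ℝ) : ℝ :=
  Real.sigmoid (catNorm Wz Uz bz + matNorm Uz * (lam - 1))

noncomputable def gruRate (lam ε : ℝ) : ℝ :=
  updateGateBound Wz Uz bz lam + (1 - updateGateBound Wz Uz bz lam) * candidateGain Wf Uf Ur bf ε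

lemma candidateGain_nonneg (ε : ℝ) : 0 ≤ candidateGain Wf Uf Ur bf ε :=
  le_max_of_le_left (mul_nonneg (matNorm_nonneg Ur) (Real.sigmoid_nonneg _))

lemma exists_candidateGain_lt_one
    (h : matNorm Ur * Real.sigmoid (catNorm Wf Uf bf) < 1) :
    ∃ ε, 0 < ε ∧ candidateGain Wf Uf Ur bf ε < 1 := by
  have hcont : Continuous fun ε => matNorm Ur * Real.sigmoid (catNorm Wf Uf bf + matNorm Uf * ε) := by
    fun_prop
  have hev : ∀ᶠ ε in 𝓝[>] 0,
      matNorm Ur * Real.sigmoid (catNorm Wf Uf bf + matNorm Uf * ε) < 1 :=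
    nhdsWithin_le_nhds <| (hcont.tendsto 0).eventually <| gt_mem_nhds <| by simpa using h
  obtain ⟨ε, hε, hε₀⟩ := (hev.and self_mem_nhdsWithin).exists
  exact ⟨ε, hε₀, max_lt hε (inv_lt_one_of_one_lt₀ (by linarith [hε₀]))⟩

lemma gruRate_pos (lam ε : ℝ) : 0 < gruRate Wz Wf Uz Uf Ur bz bf lam ε :=
  add_pos_of_pos_of_nonneg (Real.sigmoid_pos _)
    (mul_nonneg (sub_nonneg.2 (Real.sigmoid_le_one _)) (candidateGain_nonneg ..))

lemma gruRate_lt_one {lam ε : ℝ} (hc : candidateGain Wf Uf Ur bf ε < 1) :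
    gruRate Wz Wf Uz Uf Ur bz bf lam ε < 1 := by
  have hz := Real.sigmoid_lt_one (catNorm Wz Uz bz + matNorm Uz * (lam - 1))
  unfold gruRate updateGateBound
  nlinarith

lemma abs_tanh_candidate_le {ε : ℝ} (hε : 0 ≤ ε) {v : Fin nu → ℝ} (hv : ‖v‖ ≤ 1)
    (y : Fin nx → ℝ) (j : Fin nx) :
    |tanh ((Wr *ᵥ v + Ur *ᵥ (gate Wf Uf bf v y * y) + br) j)| ≤
      candidateGain Wf Uf Ur bf ε * ‖y‖ + (matNorm Wr * ‖v‖ + ‖br‖) := by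
  set σf := Real.sigmoid (catNorm Wf Uf bf + matNorm Uf * ε)
  have hr : 0 ≤ matNorm Wr * ‖v‖ + ‖br‖ :=
    add_nonneg (mul_nonneg (matNorm_nonneg Wr) (norm_nonneg v)) (norm_nonneg br)
  by_cases hy : ‖y‖ ≤ 1 + ε
  · have hfy : ‖gate Wf Uf bf v y * y‖ ≤ σf * ‖y‖ :=
      norm_mul_le_of_forall_le (Real.sigmoid_nonneg _) (fun _ => Real.sigmoid_nonneg _)
        (gate_le hv hy hε)
    have hgain : matNorm Ur * σf ≤ candidateGain Wf Uf Ur bf ε := le_max_left _ _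
    calc _ ≤ |(Wr *ᵥ v + Ur *ᵥ (gate Wf Uf bf v y * y) + br) j| := Real.abs_tanh_le_abs _
      _ ≤ |(Wr *ᵥ v) j| + |(Ur *ᵥ (gate Wf Uf bf v y * y)) j| + |br j| :=
          (abs_add_le _ _).trans (add_le_add_left (abs_add_le _ _) _)
      _ ≤ matNorm Wr * ‖v‖ + matNorm Ur * (σf * ‖y‖) + ‖br‖ := by
          gcongr
          · exact abs_mulVec_apply_le Wr v j
          · exact (abs_mulVec_apply_le Ur _ j).trans
              (mul_le_mul_of_nonneg_left hfy (matNorm_nonneg Ur))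
          · exact norm_le_pi_norm br j
      _ ≤ candidateGain Wf Uf Ur bf ε * ‖y‖ + (matNorm Wr * ‖v‖ + ‖br‖) := by
          rw [← mul_assoc]
          nlinarith [mul_le_mul_of_nonneg_right hgain (norm_nonneg y)]
  · calc _ ≤ 1 := (abs_tanh_lt_one _).le
      _ ≤ (1 + ε)⁻¹ * ‖y‖ := by
          rw [inv_mul_eq_div, le_div_iff₀ (by positivity)]
          linarith
      _ ≤ candidateGain Wf Uf Ur bf ε * ‖y‖ := by gcongr; exact le_max_right _ _
      _ ≤ _ := le_add_of_nonneg_right hr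

lemma norm_gruStep_le {lam : ℝ} (hlam : 1 ≤ lam) (v : Fin nu → ℝ) {y : Fin nx → ℝ}
    (hy : ‖y‖ ≤ lam) : ‖gruStep Wz Wf Wr Uz Uf Ur bz bf br v y‖ ≤ lam := by
  refine (pi_norm_le_iff_of_nonneg (by linarith)).2 fun j => ?_
  rw [Real.norm_eq_abs, gruStep_apply]
  calc _ ≤ gate Wz Uz bz v y j * lam + (1 - gate Wz Uz bz v y j) * lam :=
        abs_mul_add_one_sub_mul_le (Real.sigmoid_nonneg _) (Real.sigmoid_le_one _)
          ((norm_le_pi_norm y j).trans hy) ((abs_tanh_lt_one _).le.trans hlam)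
    _ = lam := by ring

lemma norm_gruStep_le_gruRate_mul_add {lam ε : ℝ} (hlam : 1 ≤ lam) (hε : 0 ≤ ε)
    (hc : candidateGain Wf Uf Ur bf ε ≤ 1) {v : Fin nu → ℝ} (hv : ‖v‖ ≤ 1) {y : Fin nx → ℝ}
    (hy : ‖y‖ ≤ lam) :
    ‖gruStep Wz Wf Wr Uz Uf Ur bz bf br v y‖ ≤
      gruRate Wz Wf Uz Uf Ur bz bf lam ε * ‖y‖ + (matNorm Wr * ‖v‖ + ‖br‖) := by
  have hr : 0 ≤ matNorm Wr * ‖v‖ + ‖br‖ :=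
    add_nonneg (mul_nonneg (matNorm_nonneg Wr) (norm_nonneg v)) (norm_nonneg br)
  refine (pi_norm_le_iff_of_nonneg (add_nonneg (mul_nonneg (gruRate_pos ..).le
    (norm_nonneg y)) hr)).2 fun j => ?_
  rw [Real.norm_eq_abs, gruStep_apply]
  have hz : gate Wz Uz bz v y j ≤ updateGateBound Wz Uz bz lam :=
    gate_le hv (by linarith) (by linarith) j
  exact (abs_mul_add_one_sub_mul_le (Real.sigmoid_nonneg _) (Real.sigmoid_le_one _)
    (norm_le_pi_norm y j) (abs_tanh_candidate_le Wf Wr Uf Ur bf br hε hv y j)).trans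
    (mul_add_one_sub_mul_le (Real.sigmoid_nonneg _) hz hc (norm_nonneg y) hr)

lemma norm_gru_trajectory_le {lam ε : ℝ} (hlam : 1 ≤ lam) (hε : 0 ≤ ε)
    (hc : candidateGain Wf Uf Ur bf ε < 1) {u : ℕ → Fin nu → ℝ} (hu : ∀ t, ‖u t‖ ≤ 1)
    {U : ℝ} (hU : ∀ t, ‖u t‖ ≤ U) {x : ℕ → Fin nx → ℝ} (hx₀ : ‖x 0‖ ≤ lam)
    (hx : ∀ k, x (k + 1) = gruStep Wz Wf Wr Uz Uf Ur bz bf br (u k) (x k)) (k : ℕ) :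
    ‖x k‖ ≤ gruRate Wz Wf Uz Uf Ur bz bf lam ε ^ k * ‖x 0‖ +
      (matNorm Wr * U + ‖br‖) / (1 - gruRate Wz Wf Uz Uf Ur bz bf lam ε) := by
  have hinv : ∀ k, ‖x k‖ ≤ lam := fun k => by
    induction k with
    | zero => exact hx₀
    | succ k ih => exact hx k ▸ norm_gruStep_le Wz Wf Wr Uz Uf Ur bz bf br hlam (u k) ih
  have hW := matNorm_nonneg Wr
  have hU₀ : 0 ≤ U := (norm_nonneg _).trans (hU 0)
  refine le_pow_mul_add_div_of_le_mul_add (a := fun k => ‖x k‖) (gruRate_pos ..).le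
    (gruRate_lt_one Wz Wf Uz Uf Ur bz bf hc) (by positivity) (fun k => ?_) k
  calc ‖x (k + 1)‖ ≤ gruRate Wz Wf Uz Uf Ur bz bf lam ε * ‖x k‖ + (matNorm Wr * ‖u k‖ + ‖br‖) :=
        hx k ▸ norm_gruStep_le_gruRate_mul_add Wz Wf Wr Uz Uf Ur bz bf br hlam hε hc.le (hu k)
          (hinv k)
    _ ≤ _ := by gcongr; exact hU k

end GRU

/-- **Theorem 1 (ISS of single-layer GRUs).**
If `‖U_r‖_∞ σ(‖[W_f U_f b_f]‖_∞) < 1` then the GRU is Input-to-State Stable: there are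
a class-KL function `β` and class-K∞ functions `γ_u, γ_b` such that for every bias `b_r`,
every initial state with `‖x̄‖_∞ ≤ λ̌`, and every unity-bounded input sequence,
`‖x(k)‖_∞ ≤ β(‖x̄‖_∞, k) + γ_u(sup_t ‖u(t)‖_∞) + γ_b(‖b_r‖_∞)`. -/
theorem gru_ISS {nu nx : ℕ}
    (Wz Wf Wr : Matrix (Fin nx) (Fin nu) ℝ)
    (Uz Uf Ur : Matrix (Fin nx) (Fin nx) ℝ)
    (bz bf : Fin nx → ℝ)
    (lam : ℝ) (hlam : 1 ≤ lam)
    (hcond : matNorm Ur * _root_.sigmoid (catNorm Wf Uf bf) < 1) :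
    ∃ β : ℝ → ℕ → ℝ, ∃ γu γb : ℝ → ℝ, IsKL β ∧ IsKInf γu ∧ IsKInf γb ∧
      ∀ br : Fin nx → ℝ, ∀ xbar : Fin nx → ℝ, ‖xbar‖ ≤ lam →
        ∀ u : ℕ → Fin nu → ℝ, (∀ t, ‖u t‖ ≤ 1) →
          ∀ x : ℕ → Fin nx → ℝ, x 0 = xbar →
            (∀ k, x (k + 1) = gruStep Wz Wf Wr Uz Uf Ur bz bf br (u k) (x k)) →
              ∀ k : ℕ, ‖x k‖ ≤ β ‖xbar‖ k + γu (⨆ t, ‖u t‖) + γb ‖br‖ := by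
  rw [sigmoid_eq_real_sigmoid] at hcond
  obtain ⟨ε, hε, hc⟩ := exists_candidateGain_lt_one Wf Uf Ur bf hcond
  set ρ := gruRate Wz Wf Uz Uf Ur bz bf lam ε
  have hρ₁ : 0 < 1 - ρ := sub_pos.2 (gruRate_lt_one Wz Wf Uz Uf Ur bz bf hc)
  have hW := matNorm_nonneg Wr
  -- the `+ 1` keeps `γu` strictly increasing when `W_r = 0`
  refine ⟨fun s k => ρ ^ k * s, fun s => (matNorm Wr + 1) / (1 - ρ) * s, fun s => (1 - ρ)⁻¹ * s,
    isKL_pow_mul (gruRate_pos ..) (gruRate_lt_one Wz Wf Uz Uf Ur bz bf hc),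
    isKInf_const_mul (by positivity), isKInf_const_mul (by positivity), ?_⟩
  intro br xbar hxbar u hu x hx₀ hx k
  set U := ⨆ t, ‖u t‖
  have hU : ∀ t, ‖u t‖ ≤ U := le_ciSup ⟨1, Set.forall_mem_range.2 hu⟩
  have hU₀ : 0 ≤ U := (norm_nonneg _).trans (hU 0)
  subst hx₀
  calc ‖x k‖ ≤ ρ ^ k * ‖x 0‖ + (matNorm Wr * U + ‖br‖) / (1 - ρ) :=
        norm_gru_trajectory_le Wz Wf Wr Uz Uf Ur bz bf br hlam hε.le hc hu hU hxbar hx k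
    _ = ρ ^ k * ‖x 0‖ + (1 - ρ)⁻¹ * (matNorm Wr * U) + (1 - ρ)⁻¹ * ‖br‖ := by ring
    _ ≤ ρ ^ k * ‖x 0‖ + (1 - ρ)⁻¹ * ((matNorm Wr + 1) * U) + (1 - ρ)⁻¹ * ‖br‖ := by
        gcongr; linarith
    _ = ρ ^ k * ‖x 0‖ + (matNorm Wr + 1) / (1 - ρ) * U + (1 - ρ)⁻¹ * ‖br‖ := by ring
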